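/- arXiv:2405.17107 — 2 statements merged into one kernel-verified Lean document; each statement's English description precedes it below -/
import Mathlib

section
/- Let A ∈ ℝ^{d×d} be invertible with d ≥ 1. Then the Frobenius norm of the inverse satisfies ‖A^{−1}‖_F ≤ d · ‖A‖_F^{d−1} / |det(A)|. -/
/-- Frobenius norm of a real square matrix. -/
noncomputable def frobeniusNorm {d : ℕ} (A : Matrix (Fin d) (Fin d) ℝ) : ℝ :=
  Real.sqrt (∑ i, ∑ j, (A i j) ^ 2)

/-!
Since `A⁻¹ = (det A)⁻¹ • adj A`, it suffices to show `‖adj A‖_F ≤ d ‖A‖_F ^ (d - 1)`. Each entry of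
`adj A` is, up to sign, the determinant of a `(d - 1) × (d - 1)` submatrix `M`, and
`det M ^ 2 = det (Mᵀ M)` is the product of the nonnegative eigenvalues of `Mᵀ M`, hence at most
the `(d - 1)`-th power of their sum `tr (Mᵀ M) = ‖M‖_F ^ 2 ≤ ‖A‖_F ^ 2`. Summing over the `d ^ 2`
entries of `adj A` gives the bound.
-/

open Matrix

lemma Fintype.sum_comp_le_sum_of_injective {ι κ N : Type*} [Fintype ι] [Fintype κ]
    [AddCommMonoid N] [Preorder N] [AddLeftMono N] {e : ι → κ} (he : Function.Injective e)
    {f : κ → N} (hf : ∀ k, 0 ≤ f k) :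
    ∑ i, f (e i) ≤ ∑ k, f k := by
  have := Finset.sum_le_sum_of_subset_of_nonneg (f := f)
    (Finset.subset_univ (Finset.univ.map ⟨e, he⟩)) fun k _ _ ↦ hf k
  rwa [Finset.sum_map] at this

namespace Matrix

variable {m n : Type*} [Fintype m] [Fintype n]

lemma sum_sq_submatrix_le {m' n' : Type*} [Fintype m'] [Fintype n'] (M : Matrix m n ℝ)
    {e : m' → m} {f : n' → n} (he : Function.Injective e) (hf : Function.Injective f) :
    ∑ i, ∑ j, M.submatrix e f i j ^ 2 ≤ ∑ i, ∑ j, M i j ^ 2 :=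
  calc ∑ i, ∑ j, M (e i) (f j) ^ 2 ≤ ∑ i, ∑ j, M (e i) j ^ 2 :=
        Finset.sum_le_sum fun i _ ↦
          Fintype.sum_comp_le_sum_of_injective hf fun j ↦ sq_nonneg (M (e i) j)
    _ ≤ ∑ i, ∑ j, M i j ^ 2 :=
        Fintype.sum_comp_le_sum_of_injective he fun i ↦
          Finset.sum_nonneg fun j _ ↦ sq_nonneg (M i j)

lemma trace_transpose_mul_self (M : Matrix m n ℝ) :
    (Mᵀ * M).trace = ∑ i, ∑ j, M i j ^ 2 := by
  simp only [trace, diag_apply, mul_apply, transpose_apply, sq]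
  exact Finset.sum_comm

lemma det_sq_le_sum_sq_pow [DecidableEq n] (M : Matrix n n ℝ) :
    M.det ^ 2 ≤ (∑ i, ∑ j, M i j ^ 2) ^ Fintype.card n := by
  have hS : (Mᵀ * M).PosSemidef := by
    simpa using posSemidef_conjTranspose_mul_self M
  set ev := hS.isHermitian.eigenvalues
  have hdet : M.det ^ 2 = ∏ i, ev i := by
    rw [show M.det ^ 2 = (Mᵀ * M).det by rw [det_mul, det_transpose, sq],
      hS.isHermitian.det_eq_prod_eigenvalues]
    simp [ev]
  have htrace : ∑ i, ∑ j, M i j ^ 2 = ∑ i, ev i := by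
    rw [← trace_transpose_mul_self, hS.isHermitian.trace_eq_sum_eigenvalues]
    simp [ev]
  rw [hdet, htrace, ← Finset.card_univ, ← Finset.prod_const]
  exact Finset.prod_le_prod (fun i _ ↦ hS.eigenvalues_nonneg i)
    fun i _ ↦ Finset.single_le_sum (fun j _ ↦ hS.eigenvalues_nonneg j) (Finset.mem_univ i)

lemma adjugate_apply_sq_le {d : ℕ} (A : Matrix (Fin d) (Fin d) ℝ) (i j : Fin d) :
    A.adjugate i j ^ 2 ≤ (∑ i, ∑ j, A i j ^ 2) ^ (d - 1) := by
  cases d with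
  | zero => exact i.elim0
  | succ n =>
    rw [adjugate_fin_succ_eq_det_submatrix, mul_pow, pow_right_comm, neg_one_sq, one_pow, one_mul,
      Nat.add_sub_cancel]
    calc (A.submatrix j.succAbove i.succAbove).det ^ 2
        ≤ (∑ p, ∑ q, A.submatrix j.succAbove i.succAbove p q ^ 2) ^ n := by
          simpa using det_sq_le_sum_sq_pow (A.submatrix j.succAbove i.succAbove)
      _ ≤ (∑ i, ∑ j, A i j ^ 2) ^ n := by
          gcongr
          exact sum_sq_submatrix_le A Fin.succAbove_right_injective Fin.succAbove_right_injective

lemma sum_sq_adjugate_le {d : ℕ} (A : Matrix (Fin d) (Fin d) ℝ) :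
    ∑ i, ∑ j, A.adjugate i j ^ 2 ≤ (d : ℝ) ^ 2 * (∑ i, ∑ j, A i j ^ 2) ^ (d - 1) :=
  calc ∑ i, ∑ j, A.adjugate i j ^ 2 ≤ ∑ _i : Fin d, ∑ _j : Fin d, (∑ i, ∑ j, A i j ^ 2) ^ (d - 1) :=
        Finset.sum_le_sum fun i _ ↦ Finset.sum_le_sum fun j _ ↦ adjugate_apply_sq_le A i j
    _ = (d : ℝ) ^ 2 * (∑ i, ∑ j, A i j ^ 2) ^ (d - 1) := by
        simp only [Finset.sum_const, Finset.card_univ, Fintype.card_fin, nsmul_eq_mul]; ring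

end Matrix

lemma frobeniusNorm_smul {d : ℕ} (c : ℝ) (A : Matrix (Fin d) (Fin d) ℝ) :
    frobeniusNorm (c • A) = |c| * frobeniusNorm A := by
  simp only [frobeniusNorm, Matrix.smul_apply, smul_eq_mul, mul_pow, ← Finset.mul_sum]
  rw [Real.sqrt_mul (sq_nonneg c), Real.sqrt_sq_eq_abs]

lemma frobeniusNorm_adjugate_le {d : ℕ} (A : Matrix (Fin d) (Fin d) ℝ) :
    frobeniusNorm A.adjugate ≤ d * frobeniusNorm A ^ (d - 1) := by
  have hS : 0 ≤ ∑ i, ∑ j, A i j ^ 2 := by positivity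
  have hpow : √((∑ i, ∑ j, A i j ^ 2) ^ (d - 1)) = frobeniusNorm A ^ (d - 1) := by
    rw [frobeniusNorm, Real.sqrt_eq_iff_eq_sq (by positivity) (by positivity), pow_right_comm,
      Real.sq_sqrt hS]
  calc frobeniusNorm A.adjugate ≤ √((d : ℝ) ^ 2 * (∑ i, ∑ j, A i j ^ 2) ^ (d - 1)) :=
        Real.sqrt_le_sqrt (sum_sq_adjugate_le A)
    _ = d * frobeniusNorm A ^ (d - 1) := by
        rw [Real.sqrt_mul (by positivity), Real.sqrt_sq d.cast_nonneg, hpow]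

theorem statement10_general (d : ℕ) (A : Matrix (Fin d) (Fin d) ℝ) :
    frobeniusNorm A⁻¹ ≤ (d : ℝ) * frobeniusNorm A ^ (d - 1) / |A.det| := by
  rw [inv_def, Ring.inverse_eq_inv', frobeniusNorm_smul, abs_inv, inv_mul_eq_div]
  gcongr
  exact frobeniusNorm_adjugate_le A

/-- bound on the Frobenius norm of the inverse matrix. -/
theorem statement10 (d : ℕ) (hd : 1 ≤ d) (A : Matrix (Fin d) (Fin d) ℝ)
    (hA : IsUnit A.det) :
    frobeniusNorm A⁻¹ ≤ (d : ℝ) * frobeniusNorm A ^ (d - 1) / |A.det| :=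
  statement10_general d A
end

section
/- Let 1 ≤ m ≤ d and f ∈ C²(ℝ^d, ℝ^m). Define Ψ^f : ℝ^d × S^{m−1} → ℝ^m by Ψ^f(x, v) = Π_m(Df(x)ᵀ·v), the first m components of Df(x)ᵀ·v. Suppose that for every (x, v) ∈ ℝ^d × S^{m−1} with Ψ^f(x, v) = 0, the differential of Ψ^f at (x, v) (as a map on the manifold ℝ^d × S^{m−1}) is surjective onto ℝ^m. Then for every compact set K ⊂ ℝ^d, H^{d−1}(Σ_f ∩ K) < +∞, where Σ_f = {x ∈ ℝ^d : rank(Df(x)) ≤ m−1}. -/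
open MeasureTheory Set Topology
open scoped ENNReal

noncomputable section

abbrev E (n : ℕ) : Type := EuclideanSpace ℝ (Fin n)

def unitCube (d : ℕ) : Set (E d) := {x | ∀ i, x i ∈ Set.Icc (0:ℝ) 1}

def openCube (d : ℕ) : Set (E d) := {x | ∀ i, x i ∈ Set.Ioo (0:ℝ) 1}

/-- Jacobian matrix of `f` at `x`. -/
def jac {d m : ℕ} (f : E d → E m) (x : E d) : Matrix (Fin m) (Fin d) ℝ :=
  Matrix.of fun i j => fderiv ℝ f x (EuclideanSpace.single j 1) i

/-- Critical set of `g` in the open unit cube. -/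
def critSet {d m : ℕ} (g : E d → E m) : Set (E d) :=
  {x ∈ openCube d | (jac g x).rank ≤ m - 1}

/-- `N_f(ε)`. -/
def Nf {d m : ℕ} (f : E d → E m) (ε : ℝ) : ℝ≥0∞ :=
  sInf { h : ℝ≥0∞ | ∃ g : E d → E m, ContDiff ℝ 1 g ∧
    (∀ x ∈ unitCube d, ‖g x - f x‖ ≤ ε ∧ ‖fderiv ℝ g x - fderiv ℝ f x‖ ≤ ε) ∧
    h = μH[(d:ℝ) - 1] (critSet g) }

/-- minimal modulus of continuity of `Df` on `U`. -/
def omegaC1 {d m : ℕ} (f : E d → E m) (U : Set (E d)) (δ : ℝ) : ℝ :=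
  sSup {r : ℝ | ∃ x ∈ U, ∃ y ∈ U, ‖x - y‖ ≤ δ ∧ r = ‖fderiv ℝ f x - fderiv ℝ f y‖}

def betaf {d m : ℕ} (f : E d → E m) (δ : ℝ) : ℝ :=
  omegaC1 f (unitCube d) (Real.sqrt d * δ) *
    (1 + Real.sqrt d * δ + 4 * (d:ℝ) ^ ((d:ℝ) + 1/2) * ((d:ℝ)+1)^4)

end

noncomputable section

open scoped RealInnerProductSpace

/-- `Ψ^f(x,v) = Π_m(Df(x)ᵀ·v)`: the first `m` components of `Df(x)ᵀ·v`. -/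
def PsiMap {d m : ℕ} (hmd : m ≤ d) (f : E d → E m) : E d × E m → E m :=
  fun p => (WithLp.toLp 2 (fun i => ∑ k, jac f p.1 k (Fin.castLE hmd i) * p.2 k) : E m)

/-
The critical set `Σ_f ∩ K` is the projection to `ℝ^d` of the compact set
`Z = {(x, v) ∈ K × S^{m-1} : Ψ^f(x, v) = 0}`: for `x ∈ Σ_f` take `v` a unit vector in the left
kernel of `Df(x)`. The set `Z` lies in the level set `{Ψ^f = 0, |v|² = 1}` of the `C¹` map
`(Ψ^f, |v|²) : ℝ^{d+m} → ℝ^{m+1}`, whose differential is surjective there by transversality (the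
radial direction `v` takes care of the `|v|²` component). Completing the differential by a
projection onto its kernel gives a local chart in which the level set is a flat slice of dimension
`d - 1`, so by the inverse function theorem the level set is locally a Lipschitz image of a bounded
subset of `ℝ^{d-1}` and has locally finite `H^{d-1}` measure. Compactness of `Z` and the
1-Lipschitz projection finish the proof.
-/

open Module
open scoped NNReal

theorem LipschitzOnWith.hausdorffMeasure_image_lt_top {X Y : Type*} [EMetricSpace X]
    [MeasurableSpace X] [BorelSpace X] [EMetricSpace Y] [MeasurableSpace Y] [BorelSpace Y]
    {K : ℝ≥0} {f : X → Y} {s : Set X} (hf : LipschitzOnWith K f s) {d : ℝ} (hd : 0 ≤ d)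
    (hs : μH[d] s < ⊤) : μH[d] (f '' s) < ⊤ :=
  (hf.hausdorffMeasure_image_le hd).trans_lt
    (ENNReal.mul_lt_top (ENNReal.rpow_lt_top_of_nonneg hd ENNReal.coe_ne_top) hs)

section LevelSet

variable {V W : Type*} [NormedAddCommGroup V] [NormedSpace ℝ V] [FiniteDimensional ℝ V]
  [NormedAddCommGroup W] [NormedSpace ℝ W]

theorem ContinuousLinearMap.exists_bijective_prod_ker {F' : V →L[ℝ] W}
    (hF' : Function.Surjective F') :
    ∃ P : V →L[ℝ] F'.ker, Function.Bijective (F'.prod P) := by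
  obtain ⟨P, hP⟩ := Submodule.ClosedComplemented.of_finiteDimensional F'.ker
  refine ⟨P, (injective_iff_map_eq_zero _).2 fun e he => ?_, fun ⟨w, k⟩ => ?_⟩
  · have hek : e ∈ F'.ker := congrArg Prod.fst he
    simpa [hP ⟨e, hek⟩] using congrArg Prod.snd he
  · obtain ⟨v, rfl⟩ := hF' w
    have hPv : F' (P v) = 0 := (P v).2
    have hk : F' k = 0 := k.2
    refine ⟨v - P v + k, ?_⟩
    ext
    · simp [hPv, hk]
    · simp [hP]

theorem finrank_ker_of_surjective {F' : V →L[ℝ] W} (hF' : Function.Surjective F') :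
    finrank ℝ F'.ker = finrank ℝ V - finrank ℝ W := by
  have h := LinearMap.finrank_range_add_finrank_ker (F' : V →ₗ[ℝ] W)
  rw [LinearMap.range_eq_top.2 hF', finrank_top] at h
  omega

theorem HasStrictFDerivAt.exists_nhds_hausdorffMeasure_fiber_lt_top [CompleteSpace W]
    [MeasurableSpace V] [BorelSpace V] {F : V → W} {F' : V →L[ℝ] W} {p : V}
    (hF : HasStrictFDerivAt F F' p) (hF' : Function.Surjective F') :
    ∃ U ∈ 𝓝 p, μH[(finrank ℝ V - finrank ℝ W : ℕ)] (F ⁻¹' {F p} ∩ U) < ⊤ := by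
  obtain ⟨P, hP⟩ := F'.exists_bijective_prod_ker hF'
  set G : V → W × F'.ker := fun q => (F q, P q)
  set T := ContinuousLinearEquiv.ofBijective (F'.prod P)
    (LinearMap.ker_eq_bot.2 hP.1) (LinearMap.range_eq_top.2 hP.2)
  have hG : HasStrictFDerivAt G (T : V →L[ℝ] W × F'.ker) p := by
    rw [ContinuousLinearEquiv.coe_ofBijective]
    exact hF.prodMk P.hasStrictFDerivAt
  set g := hG.localInverse G T p
  obtain ⟨c, t, ht, hg⟩ := hG.to_localInverse.exists_lipschitzOnWith
  set t' := t ∩ Metric.ball (G p) 1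
  -- the fibre, read in the chart `G`, is the slice `{F p} × s`
  set s : Set F'.ker := Prod.mk (F p) ⁻¹' t'
  have ht' : t' ∈ 𝓝 (G p) := Filter.inter_mem ht (Metric.ball_mem_nhds _ one_pos)
  refine ⟨{q | g (G q) = q} ∩ G ⁻¹' t',
    Filter.inter_mem hG.eventually_left_inverse (hG.continuousAt.preimage_mem_nhds ht'), ?_⟩
  have hfiber :
      F ⁻¹' {F p} ∩ ({q | g (G q) = q} ∩ G ⁻¹' t') ⊆ (fun k => g (F p, k)) '' s := by
    rintro q ⟨hq : F q = F p, hgq : g (G q) = q, hqt⟩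
    refine ⟨P q, ?_, ?_⟩
    · simpa [s, G, hq] using hqt
    · simpa [G, hq] using hgq
  have hs_bdd : s ⊆ Metric.ball (P p) 1 := fun k hk =>
    Metric.mem_ball.2 ((le_max_right _ _).trans_lt (Metric.mem_ball.1 hk.2))
  have hlip : LipschitzOnWith (c * 1) (fun k => g (F p, k)) s :=
    (hg.mono inter_subset_left).comp (LipschitzWith.prodMk_left (F p)).lipschitzOnWith
      (fun k hk => hk)
  rw [← finrank_ker_of_surjective hF']
  refine (measure_mono hfiber).trans_lt (hlip.hausdorffMeasure_image_lt_top (by positivity) ?_)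
  exact (measure_mono hs_bdd).trans_lt measure_ball_lt_top

end LevelSet

namespace Matrix

theorem exists_vecMul_eq_zero_of_rank_lt {K m n : Type*} [Field K] [Fintype m] [Fintype n]
    (A : Matrix m n K) (h : A.rank < Fintype.card m) : ∃ v ≠ 0, v ᵥ* A = 0 := by
  by_contra! hA
  refine h.ne (LinearIndependent.rank_matrix (Fintype.linearIndependent_iff.2 fun g hg => ?_))
  by_contra hg0
  exact hA g (fun h0 => hg0 (by simp [h0])) (by rwa [vecMul_eq_sum])

end Matrix

theorem ContinuousLinearMap.surjective_prod_two_smul_innerSL_comp_snd {V H W : Type*}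
    [NormedAddCommGroup V] [NormedSpace ℝ V] [NormedAddCommGroup H] [InnerProductSpace ℝ H]
    [NormedAddCommGroup W] [NormedSpace ℝ W] (A : V × H →L[ℝ] W) {v : H} (hv : ‖v‖ = 1)
    (hA : ∀ z : W, ∃ u : V, ∃ w : H, ⟪w, v⟫ = 0 ∧ A (u, w) = z) :
    Function.Surjective (A.prod ((2 • innerSL ℝ v).comp (.snd ℝ V H))) := by
  rintro ⟨z, t⟩
  obtain ⟨u, w, hwv, hAuw⟩ := hA (z - A (0, (t / 2) • v))
  have hsplit : ((u, w + (t / 2) • v) : V × H) = (u, w) + (0, (t / 2) • v) := by simp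
  refine ⟨(u, w + (t / 2) • v), Prod.ext ?_ ?_⟩
  · simp only [ContinuousLinearMap.prod_apply, hsplit, map_add, Prod.fst_add, hAuw,
      sub_add_cancel]
  · have hvw : ⟪v, w⟫ = 0 := by rwa [real_inner_comm]
    simp only [ContinuousLinearMap.prod_apply, ContinuousLinearMap.smul_comp,
      smul_apply, ContinuousLinearMap.comp_apply,
      ContinuousLinearMap.coe_snd', innerSL_apply_apply, inner_add_right, inner_smul_right,
      hvw, real_inner_self_eq_norm_sq, hv]
    ring

section Psi

variable {d m : ℕ} (hmd : m ≤ d) {f : E d → E m}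

theorem contDiff_jac_apply {n : WithTop ℕ∞} (hf : ContDiff ℝ (n + 1) f) (i : Fin m)
    (j : Fin d) :
    ContDiff ℝ n (fun x => jac f x i j) := by
  simp only [jac, Matrix.of_apply]
  exact ((EuclideanSpace.proj i).comp
    (ContinuousLinearMap.apply ℝ (E m) (EuclideanSpace.single j 1))).contDiff.comp
    (hf.fderiv_right le_rfl)

theorem contDiff_psiMap {n : WithTop ℕ∞} (hf : ContDiff ℝ (n + 1) f) :
    ContDiff ℝ n (PsiMap hmd f) :=
  contDiff_euclidean.2 fun i => by
    simp only [PsiMap]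
    exact ContDiff.sum fun k _ =>
      ((contDiff_jac_apply hf k _).comp contDiff_fst).mul (contDiff_euclidean.1 contDiff_snd k)

def psiNormSq (f : E d → E m) : E d × E m → E m × ℝ :=
  fun q => (PsiMap hmd f q, ‖q.2‖ ^ 2)

theorem psiNormSq_eq_iff {q : E d × E m} :
    psiNormSq hmd f q = (0, 1) ↔ PsiMap hmd f q = 0 ∧ ‖q.2‖ = 1 := by
  simp [psiNormSq, Prod.ext_iff, pow_eq_one_iff_of_nonneg (norm_nonneg _) two_ne_zero]

theorem hasStrictFDerivAt_psiNormSq (hf : ContDiff ℝ 2 f) (p : E d × E m) :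
    HasStrictFDerivAt (psiNormSq hmd f) ((fderiv ℝ (PsiMap hmd f) p).prod
      ((2 • innerSL ℝ p.2).comp (ContinuousLinearMap.snd ℝ (E d) (E m)))) p :=
  ((contDiff_psiMap hmd (n := 1) hf).contDiffAt.hasStrictFDerivAt one_ne_zero).prodMk
    ((hasStrictFDerivAt_norm_sq p.2).comp p hasStrictFDerivAt_snd)

theorem exists_norm_eq_one_psiMap_eq_zero (hm : 1 ≤ m) {x : E d}
    (hx : (jac f x).rank ≤ m - 1) :
    ∃ v : E m, ‖v‖ = 1 ∧ PsiMap hmd f (x, v) = 0 := by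
  obtain ⟨w, hw0, hw⟩ := (jac f x).exists_vecMul_eq_zero_of_rank_lt (by simp; omega)
  have hw0' : WithLp.toLp 2 w ≠ 0 := by simpa using hw0
  refine ⟨‖WithLp.toLp 2 w‖⁻¹ • WithLp.toLp 2 w, norm_smul_inv_norm hw0', ?_⟩
  ext i
  have := congrFun hw (Fin.castLE hmd i)
  simp only [Matrix.vecMul, dotProduct, Pi.zero_apply] at this
  simp only [PsiMap, WithLp.ofLp_smul, Pi.smul_apply, smul_eq_mul, mul_left_comm _ ‖_‖⁻¹,
    ← Finset.mul_sum, mul_comm (jac f x _ _), this, mul_zero, PiLp.zero_apply]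

theorem cast_finrank_prod_sub_finrank_prod (hd : 1 ≤ d) :
    ((finrank ℝ (E d × E m) - finrank ℝ (E m × ℝ) : ℕ) : ℝ) = d - 1 := by
  simp only [finrank_prod, finrank_euclideanSpace_fin, finrank_self]
  rw [Nat.cast_sub (by omega)]
  push_cast
  ring

end Psi

/-- if `Ψ^f` is transversal to `{0}` on `ℝ^d × S^{m−1}` (its
differential, restricted to the tangent space `ℝ^d × v^⊥`, is surjective at
every zero), then the critical set of `f` has locally finite
`(d−1)`-Hausdorff measure. -/
theorem statement15 (d m : ℕ) (hm : 1 ≤ m) (hmd : m ≤ d)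
    (f : E d → E m) (hf : ContDiff ℝ 2 f)
    (htrans : ∀ x : E d, ∀ v : E m, ‖v‖ = 1 → PsiMap hmd f (x, v) = 0 →
      ∀ z : E m, ∃ u : E d, ∃ w : E m, ⟪w, v⟫ = 0 ∧
        fderiv ℝ (PsiMap hmd f) (x, v) (u, w) = z) :
    ∀ K : Set (E d), IsCompact K →
      μH[(d:ℝ) - 1] ({x : E d | (jac f x).rank ≤ m - 1} ∩ K) < ⊤ := by
  intro K hK
  set Z := psiNormSq hmd f ⁻¹' {(0, 1)} ∩ K ×ˢ Metric.sphere 0 1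
  have hZ : IsCompact Z :=
    (hK.prod (isCompact_sphere 0 1)).inter_left (isClosed_singleton.preimage
      ((contDiff_psiMap hmd (n := 1) hf).continuous.prodMk (by fun_prop)))
  have hZ_fin : μH[(d:ℝ) - 1] Z < ⊤ := by
    refine hZ.measure_lt_top_of_nhdsWithin fun p hp => ?_
    have hp1 : psiNormSq hmd f p = (0, 1) := hp.1
    obtain ⟨hΨ, hv⟩ := (psiNormSq_eq_iff hmd).1 hp1
    obtain ⟨U, hU, hU_fin⟩ :=
      (hasStrictFDerivAt_psiNormSq hmd hf p).exists_nhds_hausdorffMeasure_fiber_lt_top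
        ((fderiv ℝ (PsiMap hmd f) p).surjective_prod_two_smul_innerSL_comp_snd hv
          (htrans p.1 p.2 hv hΨ))
    rw [hp1, cast_finrank_prod_sub_finrank_prod (hm.trans hmd)] at hU_fin
    exact ⟨Z ∩ U, inter_mem_nhdsWithin Z hU,
      (measure_mono (inter_subset_inter_left U inter_subset_left)).trans_lt hU_fin⟩
  have hcrit : {x : E d | (jac f x).rank ≤ m - 1} ∩ K ⊆ Prod.fst '' Z := by
    rintro x ⟨hx, hxK⟩
    obtain ⟨v, hv, hΨ⟩ := exists_norm_eq_one_psiMap_eq_zero hmd hm hx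
    exact ⟨(x, v), ⟨(psiNormSq_eq_iff hmd).2 ⟨hΨ, hv⟩, hxK, by simpa using hv⟩, rfl⟩
  exact (measure_mono hcrit).trans_lt
    (LipschitzWith.prod_fst.lipschitzOnWith.hausdorffMeasure_image_lt_top
      (sub_nonneg.2 (Nat.one_le_cast.2 (hm.trans hmd))) hZ_fin)

end
end
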